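/- arXiv:0903.0371 — 3 statements merged into one kernel-verified Lean document; each statement's English description precedes it below -/
import Mathlib

section
/- Let $R$ be a commutative ring, $G$ and $H$ finite groups, $U$ a finite $(H,G)$-biset, and $M$ a functor from $\mathcal{C}_U$ to $R\text{-}\mathsf{Mod}$. Then the direct sum $\Sigma(M) = \bigoplus_{u \in U} M(u)$, with actions $h \cdot m = M(h,1)(m)$ and $m \cdot g = M(1,g^{-1})(m)$ for $m \in M(u)$, is an $(RH,RG)$-bimodule, and there is an isomorphism of $(RH,RG)$-bimodules $\Sigma(M) \cong \bigoplus_{u \in [H\backslash U/G]} \mathrm{Ind}_{A(u)}^{H \times G} M(u)$, where $[H\backslash U/G]$ is a set of orbit representatives and $A(u) = \{(h,g) \in H \times G \mid hu = ug\}$. -/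
open CategoryTheory MulOpposite DirectSum

/-- An object wrapper: the objects of the category associated to an `(H,G)`-biset `U`
are the elements of `U`. -/
structure BisetCat (H G U : Type*) where
  x : U

variable {H G U : Type*} [Group H] [Group G]
  [MulAction H U] [MulAction Gᵐᵒᵖ U] [SMulCommClass H Gᵐᵒᵖ U]

/-- The category associated to an `(H,G)`-biset `U`: objects are elements of `U`,
and morphisms `u ⟶ v` are pairs `(h,g)` with `h • u = v • g`; composition of
`(h,g) : u ⟶ v` and `(h',g') : v ⟶ w` is `(h'*h, g'*g)` and the identity is `(1,1)`. -/
instance bisetCategory : Category (BisetCat H G U) where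
  Hom u v := {p : H × G // p.1 • u.x = op p.2 • v.x}
  id u := ⟨(1, 1), by simp⟩
  comp {u v w} f g := ⟨(g.1.1 * f.1.1, g.1.2 * f.1.2), by
    have hf := f.2; have hg := g.2
    calc (g.1.1 * f.1.1) • u.x = g.1.1 • (f.1.1 • u.x) := by rw [mul_smul]
    _ = g.1.1 • (op f.1.2 • v.x) := by rw [hf]
    _ = op f.1.2 • (g.1.1 • v.x) := by rw [smul_comm]
    _ = op f.1.2 • (op g.1.2 • w.x) := by rw [hg]
    _ = op (g.1.2 * f.1.2) • w.x := by rw [← mul_smul, ← op_mul]⟩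
  id_comp f := Subtype.ext (by simp [Prod.ext_iff])
  comp_id f := Subtype.ext (by simp [Prod.ext_iff])
  assoc f g h := Subtype.ext (by simp [Prod.ext_iff, mul_assoc])


/-- The stabilizer subgroup `A(u) = {(h,g) | h • u = u • g}` of `H × G`. -/
def Apt (H G : Type*) {U : Type*} [Group H] [Group G]
    [MulAction H U] [MulAction Gᵐᵒᵖ U] [SMulCommClass H Gᵐᵒᵖ U] (u : U) :
    Subgroup (H × G) where
  carrier := {p : H × G | p.1 • u = op p.2 • u}
  one_mem' := by simp
  mul_mem' := by
    intro a b ha hb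
    show (a.1 * b.1) • u = op (a.2 * b.2) • u
    calc (a.1 * b.1) • u = a.1 • (b.1 • u) := mul_smul _ _ _
    _ = a.1 • (op b.2 • u) := by rw [hb]
    _ = op b.2 • (a.1 • u) := smul_comm _ _ _
    _ = op b.2 • (op a.2 • u) := by rw [ha]
    _ = op (a.2 * b.2) • u := by rw [← mul_smul, ← op_mul]
  inv_mem' := by
    intro a ha
    show a.1⁻¹ • u = op (a.2⁻¹) • u
    have h1 : u = a.1⁻¹ • op a.2 • u := by
      rw [← ha, inv_smul_smul]
    calc a.1⁻¹ • u = a.1⁻¹ • (op a.2⁻¹ • op a.2 • u) := by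
          rw [MulOpposite.op_inv, inv_smul_smul]
    _ = op a.2⁻¹ • (a.1⁻¹ • (op a.2 • u)) := by
          rw [smul_comm]
    _ = op a.2⁻¹ • u := by rw [← h1]

open TensorProduct

/-- The relations defining the induced module `R Γ ⊗_{R X} M`: the submodule of
`R Γ ⊗_R M` spanned by the elements `(a x) ⊗ m - a ⊗ (x • m)` for `x ∈ X`. -/
noncomputable def indRel (R Γ : Type*) [CommRing R] [Group Γ] (X : Subgroup Γ)
    (M : Type*) [AddCommGroup M] [Module R M] (ρ : X →* Module.End R M) :
    Submodule R ((MonoidAlgebra R Γ) ⊗[R] M) :=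
  Submodule.span R {z | ∃ (γ : Γ) (x : X) (m : M),
    z = MonoidAlgebra.single (γ * (x : Γ)) (1 : R) ⊗ₜ[R] m -
        MonoidAlgebra.single γ (1 : R) ⊗ₜ[R] (ρ x m)}

/-- The induced module `Ind_X^Γ M = R Γ ⊗_{R X} M`, realized as the quotient of
`R Γ ⊗_R M` by the induction relations. -/
def Ind (R Γ : Type*) [CommRing R] [Group Γ] (X : Subgroup Γ)
    (M : Type*) [AddCommGroup M] [Module R M] (ρ : X →* Module.End R M) :
    Type _ :=
  ((MonoidAlgebra R Γ) ⊗[R] M) ⧸ indRel R Γ X M ρ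

noncomputable instance (R Γ : Type*) [CommRing R] [Group Γ] (X : Subgroup Γ)
    (M : Type*) [AddCommGroup M] [Module R M] (ρ : X →* Module.End R M) :
    AddCommGroup (Ind R Γ X M ρ) :=
  inferInstanceAs (AddCommGroup (((MonoidAlgebra R Γ) ⊗[R] M) ⧸ indRel R Γ X M ρ))

noncomputable instance (R Γ : Type*) [CommRing R] [Group Γ] (X : Subgroup Γ)
    (M : Type*) [AddCommGroup M] [Module R M] (ρ : X →* Module.End R M) :
    Module R (Ind R Γ X M ρ) :=
  inferInstanceAs (Module R (((MonoidAlgebra R Γ) ⊗[R] M) ⧸ indRel R Γ X M ρ))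

/-- The canonical generator `(c γ) ⊗ m` of the induced module. -/
noncomputable def Ind.gen (R Γ : Type*) [CommRing R] [Group Γ] (X : Subgroup Γ)
    (M : Type*) [AddCommGroup M] [Module R M] (ρ : X →* Module.End R M)
    (γ : Γ) (c : R) (m : M) : Ind R Γ X M ρ :=
  Submodule.Quotient.mk (MonoidAlgebra.single γ c ⊗ₜ[R] m)

universe u

variable {R : Type u} [CommRing R]

/-- The representation of the stabilizer group `A(u)` on `M(u)`, for a functor `M` from
the biset category to `R`-modules. -/
noncomputable def stabRep {H G U : Type u} [Group H] [Group G]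
    [MulAction H U] [MulAction Gᵐᵒᵖ U] [SMulCommClass H Gᵐᵒᵖ U]
    (M : BisetCat H G U ⥤ ModuleCat.{u} R) (u : U) :
    Apt H G u →* Module.End R (M.obj ⟨u⟩) where
  toFun p := (M.map (⟨(p : H × G), p.2⟩ : (⟨u⟩ : BisetCat H G U) ⟶ ⟨u⟩)).hom
  map_one' := by
    dsimp only
    have h : (⟨((1 : Apt H G u) : H × G), (1 : Apt H G u).2⟩ :
        (⟨u⟩ : BisetCat H G U) ⟶ ⟨u⟩) = 𝟙 (⟨u⟩ : BisetCat H G U) := rfl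
    exact congrArg ModuleCat.Hom.hom ((congrArg M.map h).trans (M.map_id _))
  map_mul' p q := by
    have h : (⟨((p * q : Apt H G u) : H × G), (p * q).2⟩ :
        (⟨u⟩ : BisetCat H G U) ⟶ ⟨u⟩) =
        ((⟨(q : H × G), q.2⟩ : (⟨u⟩ : BisetCat H G U) ⟶ ⟨u⟩) ≫
          (⟨(p : H × G), p.2⟩ : (⟨u⟩ : BisetCat H G U) ⟶ ⟨u⟩) :
            (⟨u⟩ : BisetCat H G U) ⟶ ⟨u⟩) := by rfl
    dsimp only
    exact congrArg ModuleCat.Hom.hom ((congrArg M.map h).trans (M.map_comp _ _))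

theorem smul_aux {H G U : Type u} [Group H] [Group G]
    [MulAction H U] [MulAction Gᵐᵒᵖ U] [SMulCommClass H Gᵐᵒᵖ U] (h : H) (g : G) (u : U) :
    h • u = op g • ((op g⁻¹ : Gᵐᵒᵖ) • h • u) := by
  rw [MulOpposite.op_inv, smul_inv_smul]

/-!
Let `H × G` act on `U` by `(h, g) • u = h u g⁻¹`; its orbits are the double cosets `H u G`, and
`A(u)` is the stabilizer of `u`. On the orbit of a representative `r`, pick `q` with `q • u = r`
and send `m ∈ M(u)` to `q⁻¹ ⊗ M(q) m ∈ Ind_{A(r)}^{H × G} M(r)`. Two choices of `q` differ by an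
element of `A(r)`, which the tensor relation `γ x ⊗ m = γ ⊗ x m` absorbs, so this is well
defined. Its inverse `γ ⊗ m ↦ M(γ) m ∈ M(γ • r)` is evidently `H × G`-equivariant.
-/
namespace Ind

variable {Γ : Type*} [Group Γ] {X : Subgroup Γ}
  {N : Type*} [AddCommGroup N] [Module R N] {ρ : X →* Module.End R N}

lemma gen_mul (γ : Γ) (x : X) (c : R) (n : N) :
    Ind.gen R Γ X N ρ (γ * x) c n = Ind.gen R Γ X N ρ γ c (ρ x n) := by
  have hrel := Submodule.smul_mem _ c
    (Submodule.subset_span ⟨γ, x, n, rfl⟩ : _ ∈ indRel R Γ X N ρ)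
  rw [smul_sub, smul_tmul', smul_tmul', MonoidAlgebra.smul_single', MonoidAlgebra.smul_single',
    mul_one] at hrel
  exact (Submodule.Quotient.eq _).mpr hrel

lemma gen_eq_smul (γ : Γ) (c : R) (n : N) :
    Ind.gen R Γ X N ρ γ c n = c • Ind.gen R Γ X N ρ γ 1 n := by
  show Submodule.Quotient.mk (p := indRel R Γ X N ρ) _ =
    c • Submodule.Quotient.mk (p := indRel R Γ X N ρ) _
  rw [← Submodule.Quotient.mk_smul, smul_tmul', MonoidAlgebra.smul_single', mul_one]

variable (R X ρ) in
noncomputable def genLinearMap (γ : Γ) : N →ₗ[R] Ind R Γ X N ρ :=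
  (indRel R Γ X N ρ).mkQ ∘ₗ TensorProduct.mk R (MonoidAlgebra R Γ) N (MonoidAlgebra.single γ 1)

lemma linearMap_ext {W : Type*} [AddCommGroup W] [Module R W] {f f' : Ind R Γ X N ρ →ₗ[R] W}
    (h : ∀ γ n, f (Ind.gen R Γ X N ρ γ 1 n) = f' (Ind.gen R Γ X N ρ γ 1 n)) : f = f' :=
  Submodule.linearMap_qext _ (TensorProduct.ext (MonoidAlgebra.lhom_ext' fun γ =>
    LinearMap.ext fun c => LinearMap.ext fun n => by
      have hc := congrArg (c • ·) (h γ n)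
      simp only [← map_smul, ← gen_eq_smul] at hc
      exact hc))

noncomputable def lift {W : Type*} [AddCommGroup W] [Module R W] (φ : Γ → N →ₗ[R] W)
    (hφ : ∀ γ (x : X), φ (γ * x) = φ γ ∘ₗ ρ x) : Ind R Γ X N ρ →ₗ[R] W :=
  (indRel R Γ X N ρ).liftQ (TensorProduct.lift ((MonoidAlgebra.basis Γ R).constr R φ)) <| by
    rw [indRel, Submodule.span_le]
    rintro _ ⟨γ, x, n, rfl⟩
    simp [← MonoidAlgebra.basis_apply, hφ]

lemma lift_gen {W : Type*} [AddCommGroup W] [Module R W] (φ : Γ → N →ₗ[R] W)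
    (hφ : ∀ γ (x : X), φ (γ * x) = φ γ ∘ₗ ρ x) (γ : Γ) (c : R) (n : N) :
    lift φ hφ (Ind.gen R Γ X N ρ γ c n) = c • φ γ n := by
  show (indRel R Γ X N ρ).liftQ _ _ (Submodule.Quotient.mk _) = _
  rw [Submodule.liftQ_apply, TensorProduct.lift.tmul, ← mul_one c,
    ← MonoidAlgebra.smul_single', map_smul, ← MonoidAlgebra.basis_apply, Module.Basis.constr_basis,
    mul_one, LinearMap.smul_apply]

lemma indRel_le_comap (p : Γ) : indRel R Γ X N ρ ≤ (indRel R Γ X N ρ).comap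
    (((Representation.leftRegular R Γ).tprod (Representation.trivial R Γ N)) p) := by
  refine Submodule.span_le.mpr ?_
  rintro _ ⟨γ, x, n, rfl⟩
  have hmem : _ ∈ indRel R Γ X N ρ := Submodule.subset_span ⟨p * γ, x, n, rfl⟩
  simpa [mul_assoc] using hmem

variable (R X ρ) in
noncomputable def representation : Representation R Γ (Ind R Γ X N ρ) :=
  ((Representation.leftRegular R Γ).tprod (Representation.trivial R Γ N)).quotient _
    indRel_le_comap

lemma representation_gen (p γ : Γ) (c : R) (n : N) :
    representation R X ρ p (Ind.gen R Γ X N ρ γ c n) = Ind.gen R Γ X N ρ (p * γ) c n := by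
  show Submodule.mapQ _ _ _ (indRel_le_comap p) (Submodule.Quotient.mk _) = _
  simp [Submodule.mapQ_apply, Ind.gen]

end Ind

namespace BisetCat

variable {H G U : Type u} [Group H] [Group G]
  [MulAction H U] [MulAction Gᵐᵒᵖ U] [SMulCommClass H Gᵐᵒᵖ U]

abbrev prodMulAction : MulAction (H × G) U where
  smul p u := (op p.2⁻¹ : Gᵐᵒᵖ) • p.1 • u
  one_smul u := by
    change (op (1 : G)⁻¹ : Gᵐᵒᵖ) • (1 : H) • u = u
    simp
  mul_smul p q u := by
    change (op (p.2 * q.2)⁻¹ : Gᵐᵒᵖ) • (p.1 * q.1) • u =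
      (op p.2⁻¹ : Gᵐᵒᵖ) • p.1 • (op q.2⁻¹ : Gᵐᵒᵖ) • q.1 • u
    rw [mul_inv_rev, op_mul, mul_smul, mul_smul, smul_comm p.1 (op q.2⁻¹ : Gᵐᵒᵖ)]

attribute [local instance] prodMulAction

lemma prod_smul_def (p : H × G) (u : U) : p • u = (op p.2⁻¹ : Gᵐᵒᵖ) • p.1 • u := rfl

lemma apt_eq_stabilizer (u : U) : Apt H G u = MulAction.stabilizer (H × G) u := by
  ext x
  change x.1 • u = op x.2 • u ↔ (op x.2⁻¹ : Gᵐᵒᵖ) • x.1 • u = u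
  rw [MulOpposite.op_inv, inv_smul_eq_iff, eq_comm]

def homOf (p : H × G) {u v : U} (h : p • u = v) : (⟨u⟩ : BisetCat H G U) ⟶ ⟨v⟩ :=
  ⟨p, h ▸ smul_aux p.1 p.2 u⟩

lemma homOf_comp (p q : H × G) {u v w : U} (hq : q • u = v) (hp : p • v = w) :
    homOf q hq ≫ homOf p hp = homOf (p * q) (by rw [mul_smul, hq, hp]) := rfl

lemma homOf_one {u : U} (h : (1 : H × G) • u = u) :
    homOf 1 h = 𝟙 (⟨u⟩ : BisetCat H G U) := rfl

variable (M : BisetCat H G U ⥤ ModuleCat.{u} R)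

lemma map_homOf_map_homOf (p q : H × G) {u v w : U} (hq : q • u = v) (hp : p • v = w)
    (m : M.obj ⟨u⟩) :
    M.map (homOf p hp) (M.map (homOf q hq) m) =
      M.map (homOf (p * q) (by rw [mul_smul, hq, hp])) m := by
  rw [← homOf_comp, M.map_comp]
  rfl

lemma map_homOf_one {u : U} (h : (1 : H × G) • u = u) (m : M.obj ⟨u⟩) :
    M.map (homOf 1 h) m = m := by
  rw [homOf_one, M.map_id]
  rfl

lemma stabRep_apply (r : U) (x : Apt H G r) (m : M.obj ⟨r⟩) :
    stabRep M r x m =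
      M.map (homOf (x : H × G) (by simpa [apt_eq_stabilizer] using x.2)) m := rfl

lemma map_homOf_congr {p p' : H × G} (hpp : p = p') {u v : U} (hp : p • u = v)
    (hp' : p' • u = v) (m : M.obj ⟨u⟩) : M.map (homOf p hp) m = M.map (homOf p' hp') m := by
  subst hpp
  rfl

lemma gen_map_homOf_congr {u r : U} {p p' : H × G} (hp : p • u = r) (hp' : p' • u = r)
    {γ γ' : H × G} (hγ : γ * p = γ' * p') (c : R) (m : M.obj ⟨u⟩) :
    Ind.gen R (H × G) (Apt H G r) (M.obj ⟨r⟩) (stabRep M r) γ c (M.map (homOf p hp) m) =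
      Ind.gen R (H × G) (Apt H G r) (M.obj ⟨r⟩) (stabRep M r) γ' c
        (M.map (homOf p' hp') m) := by
  have hx : p' * p⁻¹ ∈ Apt H G r := by
    rw [apt_eq_stabilizer, MulAction.mem_stabilizer_iff, mul_smul, inv_smul_eq_iff.mpr hp.symm,
      hp']
  have hγ' : γ = γ' * (p' * p⁻¹) := by rw [← mul_assoc, ← hγ, mul_inv_cancel_right]
  rw [hγ', show γ' * (p' * p⁻¹) = γ' * ((⟨_, hx⟩ : Apt H G r) : H × G) from rfl, Ind.gen_mul,
    stabRep_apply, map_homOf_map_homOf]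
  exact congrArg _ (map_homOf_congr M (inv_mul_cancel_right p' p) _ _ m)

variable (H G) in
def IsDoubleCosetReps (reps : Set U) : Prop :=
  ∀ u : U, ∃! r : U, r ∈ reps ∧ ∃ (h : H) (g : G), h • (op g • u) = r

lemma IsDoubleCosetReps.exists_smul_mem {reps : Set U} (hreps : IsDoubleCosetReps H G reps)
    (u : U) : ∃ p : H × G, p • u ∈ reps := by
  obtain ⟨r, ⟨hr, h, g, rfl⟩, -⟩ := hreps u
  refine ⟨(h, g⁻¹), ?_⟩
  rwa [prod_smul_def, inv_inv, ← smul_comm h]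

lemma IsDoubleCosetReps.smul_eq_of_smul_mem {reps : Set U} (hreps : IsDoubleCosetReps H G reps)
    {u : U} {p p' : H × G} (hp : p • u ∈ reps) (hp' : p' • u ∈ reps) : p • u = p' • u := by
  have hcomm (q : H × G) : q.1 • op q.2⁻¹ • u = q • u := smul_comm _ _ _
  exact (hreps u).unique ⟨hp, p.1, p.2⁻¹, hcomm p⟩ ⟨hp', p'.1, p'.2⁻¹, hcomm p'⟩

variable [DecidableEq U]

lemma lof_map_homOf_congr {p p' : H × G} (hpp : p = p') {u v v' : U}
    (hv : p • u = v) (hv' : p' • u = v') (m : M.obj ⟨u⟩) :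
    lof R U (fun u => M.obj ⟨u⟩) v (M.map (homOf p hv) m) =
      lof R U (fun u => M.obj ⟨u⟩) v' (M.map (homOf p' hv') m) := by
  subst hpp hv hv'
  rfl

noncomputable def sigmaRep : Representation R (H × G) (⨁ u : U, M.obj ⟨u⟩) where
  toFun p := toModule R U _ fun u =>
    lof R U (fun u => M.obj ⟨u⟩) (p • u) ∘ₗ (M.map (homOf p rfl)).hom
  map_one' := by
    refine DirectSum.linearMap_ext R fun u => LinearMap.ext fun m => ?_
    simp only [LinearMap.comp_apply, toModule_lof, Module.End.one_apply]
    exact (lof_map_homOf_congr M rfl rfl (one_smul _ u) m).trans (by rw [map_homOf_one])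
  map_mul' p q := by
    refine DirectSum.linearMap_ext R fun u => LinearMap.ext fun m => ?_
    simp only [LinearMap.comp_apply, toModule_lof, Module.End.mul_apply]
    exact (lof_map_homOf_congr M rfl rfl (mul_smul p q u) m).trans
      (congrArg _ (map_homOf_map_homOf M p q rfl rfl m).symm)

lemma sigmaRep_lof (p : H × G) (u : U) (m : M.obj ⟨u⟩) :
    sigmaRep M p (lof R U (fun u => M.obj ⟨u⟩) u m) =
      lof R U (fun u => M.obj ⟨u⟩) (p • u) (M.map (homOf p rfl) m) :=
  toModule_lof R (φ := fun u => lof R U (fun u => M.obj ⟨u⟩) (p • u) ∘ₗ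
    (M.map (homOf p rfl)).hom) u m

abbrev IndApt (r : U) : Type u := Ind R (H × G) (Apt H G r) (M.obj ⟨r⟩) (stabRep M r)

variable (reps : Set U) [DecidableEq reps]

noncomputable def toInd (hreps : IsDoubleCosetReps H G reps) :
    (⨁ u : U, M.obj ⟨u⟩) →ₗ[R] ⨁ r : reps, IndApt M r :=
  toModule R U _ fun u =>
    lof R reps (fun r : reps => IndApt M r) ⟨_, (hreps.exists_smul_mem u).choose_spec⟩ ∘ₗ
      Ind.genLinearMap R _ (stabRep M _) (hreps.exists_smul_mem u).choose⁻¹ ∘ₗ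
        (M.map (homOf (hreps.exists_smul_mem u).choose rfl)).hom

lemma toInd_lof (hreps : IsDoubleCosetReps H G reps)
    {u r : U} (hr : r ∈ reps) {p : H × G} (hp : p • u = r) (m : M.obj ⟨u⟩) :
    toInd M reps hreps (lof R U (fun u => M.obj ⟨u⟩) u m) =
      lof R reps (fun r : reps => IndApt M r) ⟨r, hr⟩
        (Ind.gen R (H × G) (Apt H G r) (M.obj ⟨r⟩) (stabRep M r) p⁻¹ 1
          (M.map (homOf p hp) m)) := by
  have hq := (hreps.exists_smul_mem u).choose_spec
  obtain rfl : (hreps.exists_smul_mem u).choose • u = r :=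
    (hreps.smul_eq_of_smul_mem hq (hp ▸ hr)).trans hp
  rw [toInd, toModule_lof]
  refine congrArg (lof R reps (fun r : reps => IndApt M r) _)
    (gen_map_homOf_congr M rfl hp ?_ 1 m)
  rw [inv_mul_cancel, inv_mul_cancel]

noncomputable def fromInd : (⨁ r : reps, IndApt M r) →ₗ[R] ⨁ u : U, M.obj ⟨u⟩ :=
  toModule R reps _ fun r => Ind.lift
    (fun γ => lof R U (fun u => M.obj ⟨u⟩) (γ • (r : U)) ∘ₗ (M.map (homOf γ rfl)).hom)
    (fun γ x => LinearMap.ext fun m => by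
      simp only [LinearMap.comp_apply, stabRep_apply]
      rw [map_homOf_map_homOf]
      exact lof_map_homOf_congr M rfl _ _ m)

lemma fromInd_lof_gen (r : reps) (γ : H × G) (c : R) (m : M.obj ⟨(r : U)⟩) :
    fromInd M reps (lof R reps (fun r : reps => IndApt M r) r
      (Ind.gen R (H × G) (Apt H G (r : U)) (M.obj ⟨(r : U)⟩) (stabRep M (r : U)) γ c m)) =
      c • lof R U (fun u => M.obj ⟨u⟩) (γ • (r : U)) (M.map (homOf γ rfl) m) := by
  rw [fromInd, toModule_lof, Ind.lift_gen]
  rfl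

variable (hreps : IsDoubleCosetReps H G reps)

lemma fromInd_comp_toInd : fromInd M reps ∘ₗ toInd M reps hreps = LinearMap.id := by
  refine DirectSum.linearMap_ext R fun u => LinearMap.ext fun m => ?_
  obtain ⟨p, hp⟩ := hreps.exists_smul_mem u
  rw [LinearMap.comp_apply, LinearMap.comp_apply, toInd_lof M reps hreps hp rfl, fromInd_lof_gen,
    one_smul, LinearMap.comp_apply, LinearMap.id_apply, map_homOf_map_homOf]
  exact (lof_map_homOf_congr M (inv_mul_cancel p) _ (one_smul _ u) m).trans
    (by rw [map_homOf_one])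

lemma toInd_comp_fromInd : toInd M reps hreps ∘ₗ fromInd M reps = LinearMap.id := by
  refine DirectSum.linearMap_ext R fun r => Ind.linearMap_ext fun γ m => ?_
  rw [LinearMap.comp_apply, LinearMap.comp_apply, fromInd_lof_gen, one_smul,
    toInd_lof M reps hreps r.2 (p := γ⁻¹) (inv_smul_smul γ _), map_homOf_map_homOf, inv_inv,
    map_homOf_congr M (inv_mul_cancel γ) _ (one_smul _ _), map_homOf_one]
  rfl

lemma fromInd_comp_directSum (p : H × G) :
    fromInd M reps ∘ₗ Representation.directSum
        (fun r : reps => Ind.representation R (Apt H G (r : U)) (stabRep M (r : U))) p =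
      sigmaRep M p ∘ₗ fromInd M reps := by
  refine DirectSum.linearMap_ext R fun r => Ind.linearMap_ext fun γ m => ?_
  simp only [LinearMap.comp_apply, Representation.directSum_apply, lmap_lof,
    Ind.representation_gen, fromInd_lof_gen, one_smul, sigmaRep_lof, map_homOf_map_homOf]
  exact lof_map_homOf_congr M rfl _ _ m

noncomputable def sigmaEquivInd : (⨁ u : U, M.obj ⟨u⟩) ≃ₗ[R] ⨁ r : reps, IndApt M r :=
  .ofLinearMap (toInd M reps hreps) (fromInd M reps) (toInd_comp_fromInd M reps hreps)
    (fromInd_comp_toInd M reps hreps)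

end BisetCat

theorem sigma_iso_directSum_ind_general {H G U : Type u} [Group H] [Group G]
    [DecidableEq U]
    [MulAction H U] [MulAction Gᵐᵒᵖ U] [SMulCommClass H Gᵐᵒᵖ U]
    (M : BisetCat H G U ⥤ ModuleCat.{u} R)
    (reps : Set U) [DecidableEq reps]
    (hreps : ∀ u : U, ∃! r : U, r ∈ reps ∧ ∃ (h : H) (g : G), h • (op g • u) = r) :
    ∃ ρS : (H × G) →* Module.End R (⨁ u : U, M.obj ⟨u⟩),
      (∀ (h : H) (g : G) (u : U) (m : M.obj ⟨u⟩),
        ρS (h, g) (DirectSum.lof R U (fun u => M.obj ⟨u⟩) u m) =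
          DirectSum.lof R U (fun u => M.obj ⟨u⟩) ((op g⁻¹ : Gᵐᵒᵖ) • h • u)
            (M.map (⟨(h, g), smul_aux h g u⟩ :
              (⟨u⟩ : BisetCat H G U) ⟶ ⟨(op g⁻¹ : Gᵐᵒᵖ) • h • u⟩) m)) ∧
      ∃ ρI : ∀ r : reps,
          (H × G) →* Module.End R (Ind R (H × G) (Apt H G (r : U)) (M.obj ⟨(r : U)⟩)
            (stabRep M (r : U))),
        (∀ (r : reps) (p p' : H × G) (c : R) (m : M.obj ⟨(r : U)⟩),
          ρI r p (Ind.gen R (H × G) (Apt H G (r : U)) _ (stabRep M (r : U)) p' c m) =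
            Ind.gen R (H × G) (Apt H G (r : U)) _ (stabRep M (r : U)) (p * p') c m) ∧
        ∃ ρD : (H × G) →* Module.End R
            (⨁ r : reps, Ind R (H × G) (Apt H G (r : U)) (M.obj ⟨(r : U)⟩)
              (stabRep M (r : U))),
          (∀ (p : H × G) (r : reps) x, ρD p (DirectSum.lof R reps _ r x) =
            DirectSum.lof R reps _ r (ρI r p x)) ∧
          ∃ e : (⨁ u : U, M.obj ⟨u⟩) ≃ₗ[R]
              (⨁ r : reps, Ind R (H × G) (Apt H G (r : U)) (M.obj ⟨(r : U)⟩)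
                (stabRep M (r : U))),
            ∀ (p : H × G) x, e (ρS p x) = ρD p (e x) := by
  let ρI (r : reps) := Ind.representation R (Apt H G (r : U)) (stabRep M (r : U))
  let e := BisetCat.sigmaEquivInd M reps hreps
  refine ⟨BisetCat.sigmaRep M, fun h g u m => BisetCat.sigmaRep_lof M (h, g) u m, ρI,
    fun r p p' c m => Ind.representation_gen p p' c m, Representation.directSum ρI,
    fun p r x => lmap_lof (fun r => ρI r p) r x, e, fun p x => e.symm.injective ?_⟩
  calc e.symm (e (BisetCat.sigmaRep M p x))
      = BisetCat.sigmaRep M p (e.symm (e x)) := by rw [e.symm_apply_apply, e.symm_apply_apply]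
    _ = e.symm (Representation.directSum ρI p (e x)) :=
      (LinearMap.congr_fun (BisetCat.fromInd_comp_directSum M reps p) (e x)).symm

/-- `Σ(M) = ⨁_{u ∈ U} M(u)` is an `(RH,RG)`-bimodule (i.e. an `R(H×G)`-module, with
`(h,g) • m = M(h,g)(m)` landing in `M(h•u•g⁻¹)` for `m ∈ M(u)`), and as such it is
isomorphic to `⨁_{r ∈ [H\U/G]} Ind_{A(r)}^{H×G} M(r)`. -/
theorem sigma_iso_directSum_ind {H G U : Type u} [Group H] [Group G]
    [Finite H] [Finite G] [Finite U] [DecidableEq U]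
    [MulAction H U] [MulAction Gᵐᵒᵖ U] [SMulCommClass H Gᵐᵒᵖ U]
    (M : BisetCat H G U ⥤ ModuleCat.{u} R)
    (reps : Set U) [DecidableEq reps]
    (hreps : ∀ u : U, ∃! r : U, r ∈ reps ∧ ∃ (h : H) (g : G), h • (op g • u) = r) :
    ∃ ρS : (H × G) →* Module.End R (⨁ u : U, M.obj ⟨u⟩),
      (∀ (h : H) (g : G) (u : U) (m : M.obj ⟨u⟩),
        ρS (h, g) (DirectSum.lof R U (fun u => M.obj ⟨u⟩) u m) =
          DirectSum.lof R U (fun u => M.obj ⟨u⟩) ((op g⁻¹ : Gᵐᵒᵖ) • h • u)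
            (M.map (⟨(h, g), smul_aux h g u⟩ :
              (⟨u⟩ : BisetCat H G U) ⟶ ⟨(op g⁻¹ : Gᵐᵒᵖ) • h • u⟩) m)) ∧
      ∃ ρI : ∀ r : reps,
          (H × G) →* Module.End R (Ind R (H × G) (Apt H G (r : U)) (M.obj ⟨(r : U)⟩)
            (stabRep M (r : U))),
        (∀ (r : reps) (p p' : H × G) (c : R) (m : M.obj ⟨(r : U)⟩),
          ρI r p (Ind.gen R (H × G) (Apt H G (r : U)) _ (stabRep M (r : U)) p' c m) =
            Ind.gen R (H × G) (Apt H G (r : U)) _ (stabRep M (r : U)) (p * p') c m) ∧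
        ∃ ρD : (H × G) →* Module.End R
            (⨁ r : reps, Ind R (H × G) (Apt H G (r : U)) (M.obj ⟨(r : U)⟩)
              (stabRep M (r : U))),
          (∀ (p : H × G) (r : reps) x, ρD p (DirectSum.lof R reps _ r x) =
            DirectSum.lof R reps _ r (ρI r p x)) ∧
          ∃ e : (⨁ u : U, M.obj ⟨u⟩) ≃ₗ[R]
              (⨁ r : reps, Ind R (H × G) (Apt H G (r : U)) (M.obj ⟨(r : U)⟩)
                (stabRep M (r : U))),
            ∀ (p : H × G) x, e (ρS p x) = ρD p (e x) :=
  sigma_iso_directSum_ind_general M reps hreps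
end

section
/- Let $G$, $H$, $K$ be groups, $X \leq H \times G$, $Y \leq K \times H$, $t \in H$, and consider the element $w = (\,(1,1)Y,\; {}_H\, (t,1)X\,)$ of the $(K,G)$-biset $V \times_H U$, where $V = (K\times H)/Y$ and $U = (H\times G)/X$. Then the stabilizer $A(w) = \{(k,g) \in K \times G \mid k w = w g\}$ equals $Y * {}^{(t,1)}X = \{(k,g) \mid \exists h \in H, (k,h) \in Y, (t^{-1}ht, g) \in X\}$. -/
variable {G H K : Type*} [Group G] [Group H] [Group K]

/-- The star (composition) product `Y * ⁽ᵗ'¹⁾X` of subgroups `Y ≤ K × H`, `X ≤ H × G`. -/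
def starSubgroup (X : Subgroup (H × G)) (Y : Subgroup (K × H)) (t : H) :
    Subgroup (K × G) where
  carrier := {p : K × G | ∃ h : H, (p.1, h) ∈ Y ∧ (t⁻¹ * h * t, p.2) ∈ X}
  one_mem' := ⟨1, by exact Y.one_mem, by simp only [mul_one, inv_mul_cancel]; exact X.one_mem⟩
  mul_mem' := by
    rintro a b ⟨h, hY, hX⟩ ⟨h', hY', hX'⟩
    refine ⟨h * h', ?_, ?_⟩
    · exact Y.mul_mem hY hY'
    · have : ((t⁻¹ * (h * h') * t : H), (a.2 * b.2 : G)) =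
        ((t⁻¹ * h * t, a.2) : H × G) * (t⁻¹ * h' * t, b.2) := by
        ext <;> simp <;> group
      rw [show ((a * b : K × G).2) = a.2 * b.2 from rfl, this]
      exact X.mul_mem hX hX'
  inv_mem' := by
    rintro a ⟨h, hY, hX⟩
    refine ⟨h⁻¹, ?_, ?_⟩
    · have : ((a.1⁻¹ : K), h⁻¹) = ((a.1, h) : K × H)⁻¹ := rfl
      rw [show ((a⁻¹ : K × G).1) = a.1⁻¹ from rfl, this]
      exact Y.inv_mem hY
    · have : ((t⁻¹ * h⁻¹ * t : H), (a.2⁻¹ : G)) = ((t⁻¹ * h * t, a.2) : H × G)⁻¹ := by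
        ext <;> simp <;> group
      rw [show ((a⁻¹ : K × G).2) = a.2⁻¹ from rfl, this]
      exact X.inv_mem hX

/-- The relation on `V × U` whose quotient is `V ×_H U`: `(v,u) ∼ (v·h, h⁻¹·u)`.
Here `V = (K×H)/Y` and `U = (H×G)/X`, with right `H`-action `v·h = (1,h⁻¹)•v` and
left `H`-action `h•u = (h,1)•u`. -/
def prodRel (X : Subgroup (H × G)) (Y : Subgroup (K × H))
    (p q : ((K × H) ⧸ Y) × ((H × G) ⧸ X)) : Prop :=
  ∃ h : H, q = ((((1 : K), h⁻¹) : K × H) • p.1, ((h⁻¹, (1 : G)) : H × G) • p.2)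

/-!
Because `prodRel` is an equivalence relation, two pairs of cosets represent the same point of
`V ×_H U` iff a single `h ∈ H` moves one onto the other. For the two representatives of `k w`
and `w g` this says `(k, h⁻¹) ∈ Y` and `(t⁻¹ h⁻¹ t, g) ∈ X`; replacing `h` by `h⁻¹` gives the
star product.
-/

theorem prodRel_equivalence (X : Subgroup (H × G)) (Y : Subgroup (K × H)) :
    Equivalence (prodRel X Y) where
  refl p := ⟨1, by simp [Prod.mk_one_one]⟩
  symm := by
    rintro p q ⟨h, rfl⟩
    exact ⟨h⁻¹, by simp [smul_smul, Prod.mk_one_one]⟩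
  trans := by
    rintro p q r ⟨h, rfl⟩ ⟨h', rfl⟩
    exact ⟨h * h', by simp [smul_smul]⟩

theorem quot_mk_prodRel_eq_iff (X : Subgroup (H × G)) (Y : Subgroup (K × H))
    (p q : ((K × H) ⧸ Y) × ((H × G) ⧸ X)) :
    Quot.mk (prodRel X Y) p = Quot.mk (prodRel X Y) q ↔ prodRel X Y p q := by
  rw [Quot.eq, (prodRel_equivalence X Y).eqvGen_iff]

theorem prodRel_mk_iff (X : Subgroup (H × G)) (Y : Subgroup (K × H)) (a c : K × H)
    (b d : H × G) :
    prodRel X Y ((a : (K × H) ⧸ Y), (b : (H × G) ⧸ X)) (c, d) ↔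
      ∃ h : H, c⁻¹ * ((1, h⁻¹) * a) ∈ Y ∧ d⁻¹ * ((h⁻¹, 1) * b) ∈ X := by
  simp only [prodRel, Prod.ext_iff, MulAction.Quotient.smul_mk, smul_eq_mul, QuotientGroup.eq]

/-- The stabilizer of the point `w = ((1,1)Y, (t,1)X)` of the `(K,G)`-biset
`((K×H)/Y) ×_H ((H×G)/X)` is exactly the subgroup `Y * ⁽ᵗ'¹⁾X`. -/
theorem stabilizer_of_point_in_product (X : Subgroup (H × G)) (Y : Subgroup (K × H)) (t : H) :
    {p : K × G |
        Quot.mk (prodRel X Y)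
          (((((p.1, (1:H)) : K × H) : K × H) : (K × H) ⧸ Y),
            (((t, (1:G)) : H × G) : (H × G) ⧸ X)) =
        Quot.mk (prodRel X Y)
          (((1 : K × H) : (K × H) ⧸ Y),
            ((((((1:H), p.2⁻¹) : H × G) * ((t, (1:G)) : H × G)) : H × G) : (H × G) ⧸ X))} =
      (starSubgroup X Y t : Set (K × G)) := by
  ext ⟨k, g⟩
  simp only [Set.mem_ofPred_eq, SetLike.mem_coe, quot_mk_prodRel_eq_iff, prodRel_mk_iff]
  refine (Equiv.inv H).exists_congr fun h => ?_
  simp only [Equiv.inv_apply, Prod.mk_mul_mk, Prod.inv_mk, inv_one, one_mul, mul_one, inv_inv,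
    mul_assoc]
end

section
/- Let $G$, $H$, $K$ be groups, $X \leq H \times G$, $Y \leq K \times H$, $U = (H\times G)/X$ and $V = (K\times H)/Y$ as bisets. The map sending the double coset $p_2(Y)\, t\, p_1(X)$ to the $(K,G)$-orbit of $((1,1)Y, {}_H (t,1)X)$ in $V \times_H U$ is a well-defined bijection from the set of double cosets $p_2(Y)\backslash H / p_1(X)$ to the set of $(K,G)$-orbits of $V \times_H U$. -/
variable {G H K : Type*} [Group G] [Group H] [Group K]

/-- The action of `(k,g) ∈ K × G` on the biset `((K×H)/Y) ×_H ((H×G)/X)`. -/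
def kgAct (X : Subgroup (H × G)) (Y : Subgroup (K × H)) (k : K) (g : G) :
    Quot (prodRel X Y) → Quot (prodRel X Y) :=
  Quot.map (fun p => ((((k, (1:H)) : K × H) • p.1, ((((1:H), g⁻¹) : H × G)) • p.2)))
    (by
      rintro ⟨v, u⟩ q ⟨h, rfl⟩
      refine ⟨h, ?_⟩
      simp only [smul_smul]
      refine Prod.ext ?_ ?_ <;> · dsimp; congr 1; ext <;> simp)

/-!
Every element of `V ×_H U` is the class of a pair `((a, b)Y, (c, g)X)`. Balancing over `H` by
`b` turns it into `((a, 1)Y, (b⁻¹c, g)X)`, and the action of `(a⁻¹, g)` then into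
`((1, 1)Y, (b⁻¹c, 1)X)`, so `t ↦ ((1, 1)Y, (t, 1)X)` hits every orbit. Conversely the double
coset `p₂(Y) b⁻¹c p₁(X)` is an invariant of the orbit: changing the representatives `(a, b)`
and `(c, g)` multiplies `b⁻¹c` on the left by an element of `p₂(Y)` and on the right by one of
`p₁(X)`, while balancing over `H` and the `(K, G)`-action leave `b⁻¹c` unchanged.
-/

namespace BisetTensor

variable (X : Subgroup (H × G)) (Y : Subgroup (K × H))

abbrev OrbitRel (x x' : Quot (prodRel X Y)) : Prop :=
  ∃ (k : K) (g : G), kgAct X Y k g x = x'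

abbrev Orbits := Quot (OrbitRel X Y)

abbrev Dosets := DoubleCoset.Quotient (↑(Y.map (MonoidHom.snd K H)) : Set H)
  (↑(X.map (MonoidHom.fst H G)) : Set H)

abbrev dosetMk (t : H) : Dosets X Y :=
  DoubleCoset.mk (Y.map (MonoidHom.snd K H)) (X.map (MonoidHom.fst H G)) t

def mk (a : K) (b c : H) (g : G) : Quot (prodRel X Y) :=
  Quot.mk _ ((((a, b) : K × H) : (K × H) ⧸ Y), (((c, g) : H × G) : (H × G) ⧸ X))

variable {X Y} in
theorem mk_eq_mk {a a' : K} {b b' c c' : H} {g g' : G}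
    (hY : ((a, b) : K × H)⁻¹ * (a', b') ∈ Y) (hX : ((c, g) : H × G)⁻¹ * (c', g') ∈ X) :
    mk X Y a b c g = mk X Y a' b' c' g' :=
  congrArg (Quot.mk _) (Prod.ext (QuotientGroup.eq.mpr hY) (QuotientGroup.eq.mpr hX))

theorem mk_inv_mul_inv_mul (h : H) (a : K) (b c : H) (g : G) :
    mk X Y a (h⁻¹ * b) (h⁻¹ * c) g = mk X Y a b c g :=
  (Quot.sound ⟨h, by simp [MulAction.Quotient.smul_mk]⟩).symm

theorem kgAct_mk (k : K) (g : G) (a : K) (b c : H) (g' : G) :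
    kgAct X Y k g (mk X Y a b c g') = mk X Y (k * a) b c (g⁻¹ * g') := by
  show Quot.mk _ (_, _) = Quot.mk _ (_, _)
  simp [MulAction.Quotient.smul_mk]

theorem exists_mk_eq (x : Quot (prodRel X Y)) : ∃ a b c g, mk X Y a b c g = x := by
  obtain ⟨⟨v, u⟩⟩ := x
  induction v using QuotientGroup.induction_on
  induction u using QuotientGroup.induction_on
  exact ⟨_, _, _, _, rfl⟩

theorem orbit_mk (a : K) (b c : H) (g : G) :
    (Quot.mk _ (mk X Y a b c g) : Orbits X Y) = Quot.mk _ (mk X Y 1 1 (b⁻¹ * c) 1) := by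
  refine (congrArg _ (mk_inv_mul_inv_mul X Y b a b c g).symm).trans (Quot.sound ⟨a⁻¹, g, ?_⟩)
  simp [kgAct_mk]

def dosetOf : Quot (prodRel X Y) → Dosets X Y :=
  Quot.lift
    (fun p => Quotient.liftOn₂ p.1 p.2 (fun v u => dosetMk X Y (v.2⁻¹ * u.1)) <| by
      intro v u v' u' hv hu
      rw [DoubleCoset.eq]
      refine ⟨(v⁻¹ * v').2⁻¹, ?_, (u⁻¹ * u').1, ?_, by simp [mul_assoc]⟩
      · exact ⟨(v⁻¹ * v')⁻¹, Y.inv_mem (QuotientGroup.leftRel_apply.mp hv), rfl⟩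
      · exact ⟨u⁻¹ * u', QuotientGroup.leftRel_apply.mp hu, rfl⟩)
    (by
      rintro ⟨v, u⟩ _ ⟨h, rfl⟩
      induction v using QuotientGroup.induction_on
      induction u using QuotientGroup.induction_on
      show dosetMk X Y _ = dosetMk X Y _
      simp [mul_assoc])

theorem dosetOf_mk (a : K) (b c : H) (g : G) :
    dosetOf X Y (mk X Y a b c g) = dosetMk X Y (b⁻¹ * c) := rfl

theorem dosetOf_kgAct (k : K) (g : G) (x : Quot (prodRel X Y)) :
    dosetOf X Y (kgAct X Y k g x) = dosetOf X Y x := by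
  obtain ⟨a, b, c, g', rfl⟩ := exists_mk_eq X Y x
  rw [kgAct_mk, dosetOf_mk, dosetOf_mk]

def orbitToDoset : Orbits X Y → Dosets X Y :=
  Quot.lift (dosetOf X Y) fun _ _ ⟨k, g, hkg⟩ => hkg ▸ (dosetOf_kgAct X Y k g _).symm

variable {X Y} in
theorem orbit_mk_one_mul_mul {y x : H} (hy : y ∈ Y.map (MonoidHom.snd K H))
    (hx : x ∈ X.map (MonoidHom.fst H G)) (t : H) :
    (Quot.mk _ (mk X Y 1 1 (y * t * x) 1) : Orbits X Y) = Quot.mk _ (mk X Y 1 1 t 1) := by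
  obtain ⟨⟨k, y⟩, hy, rfl⟩ := hy
  obtain ⟨⟨x, g⟩, hx, rfl⟩ := hx
  have : mk X Y 1 1 t 1 = mk X Y k⁻¹ y⁻¹ (t * x) g :=
    mk_eq_mk (by simpa using Y.inv_mem hy) (by simpa using hx)
  rw [this, orbit_mk X Y k⁻¹]
  simp [mul_assoc]

def dosetToOrbit : Dosets X Y → Orbits X Y :=
  Quotient.lift (fun t => Quot.mk _ (mk X Y 1 1 t 1)) fun _ _ h => by
    obtain ⟨y, hy, x, hx, rfl⟩ := DoubleCoset.rel_iff.mp h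
    exact (orbit_mk_one_mul_mul hy hx _).symm

def dosetEquivOrbits : Dosets X Y ≃ Orbits X Y where
  toFun := dosetToOrbit X Y
  invFun := orbitToDoset X Y
  left_inv := Quotient.ind fun t => by
    show dosetMk X Y (1⁻¹ * t) = dosetMk X Y t
    rw [inv_one, one_mul]
  right_inv := Quot.ind fun x => by
    obtain ⟨a, b, c, g, rfl⟩ := exists_mk_eq X Y x
    exact (orbit_mk X Y a b c g).symm

end BisetTensor

/-- The map sending the double coset `p₂(Y) t p₁(X)` to the `(K,G)`-orbit of
`((1,1)Y, (t,1)X)` is a well-defined bijection from `p₂(Y)\H/p₁(X)` to the set of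
`(K,G)`-orbits of `((K×H)/Y) ×_H ((H×G)/X)`. -/
theorem doset_equiv_orbits (X : Subgroup (H × G)) (Y : Subgroup (K × H)) :
    ∃ e : DoubleCoset.Quotient (↑(Y.map (MonoidHom.snd K H)) : Set H)
        (↑(X.map (MonoidHom.fst H G)) : Set H) ≃
        Quot (fun x x' : Quot (prodRel X Y) => ∃ (k : K) (g : G), kgAct X Y k g x = x'),
      ∀ t : H,
        e (DoubleCoset.mk (Y.map (MonoidHom.snd K H)) (X.map (MonoidHom.fst H G)) t) =
          Quot.mk _ (Quot.mk _ (((1 : K × H) : (K × H) ⧸ Y),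
            (((t, (1:G)) : H × G) : (H × G) ⧸ X))) :=
  ⟨BisetTensor.dosetEquivOrbits X Y, fun _ => rfl⟩
end
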